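/- arXiv:1611.00718 — 2 statements merged into one kernel-verified Lean document; each statement's English description precedes it below -/
import Mathlib

section
/- The homomorphism density into a graphon extends the homomorphism density into a graph: for all finite simple graphs H and G (with G having at least one vertex), t(H, W_G) = t(H, G), where W_G is the pixel graphon of G. -/
open MeasureTheory

attribute [local instance] MeasureTheory.Measure.Subtype.measureSpace

noncomputable section

/-- The unit interval `[0,1]` as a measure space (with Lebesgue measure). -/
abbrev unitI : Type := Set.Icc (0 : ℝ) 1

/-- A (labeled) graphon: a symmetric, measurable function `[0,1]² → [0,1]`. -/
structure Graphon where
  toFun : unitI → unitI → ℝ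
  measurable' : Measurable (Function.uncurry toFun)
  symm' : ∀ x y, toFun x y = toFun y x
  nonneg' : ∀ x y, 0 ≤ toFun x y
  le_one' : ∀ x y, toFun x y ≤ 1

/-- The cut distance between two (labeled) graphons: the infimum, over pairs of invertible
measure-preserving re-labelings `φ, ψ` of `[0,1]`, of the supremum over measurable sets
`S, T ⊆ [0,1]` of `|∫_{S×T} (W(φx,φy) - U(ψx,ψy))|`. -/
def cutDist (W U : Graphon) : ℝ :=
  ⨅ p : {p : (unitI ≃ᵐ unitI) × (unitI ≃ᵐ unitI) //
      MeasurePreserving p.1 volume volume ∧ MeasurePreserving p.2 volume volume},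
    ⨆ ST : {ST : Set unitI × Set unitI // MeasurableSet ST.1 ∧ MeasurableSet ST.2},
      |∫ q in ST.1.1 ×ˢ ST.1.2,
        (W.toFun (p.1.1 q.1) (p.1.1 q.2) - U.toFun (p.1.2 q.1) (p.1.2 q.2))|

/-- The index in `Fin n` of the pixel containing `x ∈ [0,1]`; for `x ∈ ((i-1)/n, i/n]`
this is `⌈n x⌉ - 1 = i - 1`, corresponding to the vertex labeled `i` in `{1, …, n}`. -/
def pixelIdx (n : ℕ) (hn : 0 < n) (x : unitI) : Fin n :=
  ⟨min (n - 1) (⌈(n : ℝ) * x.1⌉₊ - 1), lt_of_le_of_lt (min_le_left _ _) (Nat.sub_lt hn one_pos)⟩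

lemma measurable_pixelIdx (n : ℕ) (hn : 0 < n) : Measurable (pixelIdx n hn) := by
  have h1 : Measurable fun x : unitI => ⌈(n : ℝ) * x.1⌉₊ :=
    (Nat.measurable_ceil.comp (measurable_const.mul measurable_subtype_coe))
  exact (measurable_from_top (f := fun m : ℕ =>
    (⟨min (n - 1) (m - 1), lt_of_le_of_lt (min_le_left _ _) (Nat.sub_lt hn one_pos)⟩ : Fin n))).comp h1

open scoped Classical in
/-- The pixel graphon of a finite simple graph `G` on vertex set `Fin n`. -/
def pixelGraphon {n : ℕ} (hn : 0 < n) (G : SimpleGraph (Fin n)) : Graphon where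
  toFun x y := if G.Adj (pixelIdx n hn x) (pixelIdx n hn y) then 1 else 0
  measurable' := by
    apply Measurable.ite _ measurable_const measurable_const
    have : Measurable fun q : unitI × unitI => (pixelIdx n hn q.1, pixelIdx n hn q.2) :=
      ((measurable_pixelIdx n hn).comp measurable_fst).prodMk
        ((measurable_pixelIdx n hn).comp measurable_snd)
    exact this ((Set.toFinite {q : Fin n × Fin n | G.Adj q.1 q.2}).measurableSet)
  symm' := by
    intro x y
    simp only [SimpleGraph.adj_comm]
  nonneg' := by intro x y; split <;> norm_num
  le_one' := by intro x y; split <;> norm_num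

open scoped Classical in
/-- The homomorphism density `t(H, W)` of a finite simple graph `H` in a graphon `W`. -/
def homDensityG {k : ℕ} (H : SimpleGraph (Fin k)) (W : Graphon) : ℝ :=
  ∫ x : Fin k → unitI, ∏ e ∈ H.edgeFinset,
    Sym2.lift ⟨fun i j => W.toFun (x i) (x j), fun i j => W.symm' (x i) (x j)⟩ e

/-- The number of graph homomorphisms from `H` to `G`. -/
def homCount {k n : ℕ} (H : SimpleGraph (Fin k)) (G : SimpleGraph (Fin n)) : ℕ :=
  Nat.card (H →g G)

/-- The homomorphism density `t(H, G) = hom(H, G) / n ^ k` of `H` in a graph `G` on `n` vertices. -/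
def homDensity {k n : ℕ} (H : SimpleGraph (Fin k)) (G : SimpleGraph (Fin n)) : ℝ :=
  (homCount H G : ℝ) / (n : ℝ) ^ k

/-- The 4-cycle `C₄`. -/
def C4 : SimpleGraph (Fin 4) := SimpleGraph.cycleGraph 4

/-- The single edge `K₂`. -/
def K2 : SimpleGraph (Fin 2) := ⊤

/-!
The integrand of `t(H, W_G)` at `x ∈ [0,1]^k` depends only on the pixels `pixelIdx ∘ x` of the
coordinates, where it is the indicator that they form a homomorphism `H → G`. Every pixel has
length `1/n`, so each fibre of `x ↦ pixelIdx ∘ x` has measure `n^{-k}`: the coordinatewise pixel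
map pushes Lebesgue measure forward to the uniform measure on `[n]^k`, and the integral is the
homomorphism count divided by `n^k`.
-/

open Set
open scoped ENNReal

lemma pixelIdx_val {n : ℕ} (hn : 0 < n) (x : unitI) :
    (pixelIdx n hn x : ℕ) = ⌈(n : ℝ) * x⌉₊ - 1 := by
  have hceil : ⌈(n : ℝ) * x⌉₊ ≤ n :=
    Nat.ceil_le.mpr (mul_le_of_le_one_right n.cast_nonneg x.2.2)
  simp only [pixelIdx]
  omega

lemma pixelIdx_eq_of_mem_Ioo {n : ℕ} (hn : 0 < n) {x : unitI} {a : Fin n}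
    (hx : (x : ℝ) ∈ Ioo ((a : ℝ) / n) ((a + 1) / n)) : pixelIdx n hn x = a := by
  have hnR : (0 : ℝ) < n := Nat.cast_pos.mpr hn
  rw [mem_Ioo, div_lt_iff₀' hnR, lt_div_iff₀' hnR] at hx
  have hceil : ⌈(n : ℝ) * x⌉₊ = a + 1 := by
    rw [Nat.ceil_eq_iff (by omega)]
    push_cast
    constructor <;> linarith
  ext
  rw [pixelIdx_val, hceil, Nat.add_sub_cancel]

lemma mem_Icc_of_pixelIdx_eq {n : ℕ} (hn : 0 < n) {x : unitI} {a : Fin n}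
    (hx : pixelIdx n hn x = a) : (x : ℝ) ∈ Icc ((a : ℝ) / n) ((a + 1) / n) := by
  have hnR : (0 : ℝ) < n := Nat.cast_pos.mpr hn
  have ha : (a : ℕ) = ⌈(n : ℝ) * x⌉₊ - 1 := by rw [← hx, pixelIdx_val]
  rw [mem_Icc, div_le_iff₀' hnR, le_div_iff₀' hnR]
  constructor
  · rcases Nat.eq_zero_or_pos (a : ℕ) with h0 | hpos
    · rw [h0, Nat.cast_zero]; exact mul_nonneg hnR.le x.2.1
    · exact (Nat.lt_ceil.mp (by omega)).le
  · calc (n : ℝ) * x ≤ ⌈(n : ℝ) * x⌉₊ := Nat.le_ceil _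
      _ ≤ ((a + 1 : ℕ) : ℝ) := by exact_mod_cast (by omega : ⌈(n : ℝ) * x⌉₊ ≤ a + 1)
      _ = a + 1 := by push_cast; ring

lemma volume_pixelIdx_preimage_singleton {n : ℕ} (hn : 0 < n) (a : Fin n) :
    volume (pixelIdx n hn ⁻¹' {a}) = (n : ℝ≥0∞)⁻¹ := by
  have hnR : (0 : ℝ) < n := Nat.cast_pos.mpr hn
  have hlen : ENNReal.ofReal ((a + 1) / n - a / n) = (n : ℝ≥0∞)⁻¹ := by
    rw [← sub_div, add_sub_cancel_left, one_div, ENNReal.ofReal_inv_of_pos hnR,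
      ENNReal.ofReal_natCast]
  have hIoo : Ioo ((a : ℝ) / n) ((a + 1) / n) ⊆ Icc 0 1 := by
    refine Ioo_subset_Icc_self.trans (Icc_subset_Icc (by positivity) ?_)
    rw [div_le_one hnR]
    exact_mod_cast a.2
  apply le_antisymm
  · calc volume (pixelIdx n hn ⁻¹' {a})
        ≤ volume (((↑) : unitI → ℝ) ⁻¹' Icc ((a : ℝ) / n) ((a + 1) / n)) :=
          measure_mono fun x hx => mem_Icc_of_pixelIdx_eq hn hx
      _ ≤ volume (Icc ((a : ℝ) / n) ((a + 1) / n)) := by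
          rw [volume_preimage_coe measurableSet_Icc.nullMeasurableSet measurableSet_Icc]
          exact measure_mono inter_subset_left
      _ = (n : ℝ≥0∞)⁻¹ := by rw [Real.volume_Icc, hlen]
  · calc (n : ℝ≥0∞)⁻¹ = volume (Ioo ((a : ℝ) / n) ((a + 1) / n)) := by
          rw [Real.volume_Ioo, hlen]
      _ = volume (((↑) : unitI → ℝ) ⁻¹' Ioo ((a : ℝ) / n) ((a + 1) / n)) := by
          rw [volume_preimage_coe measurableSet_Icc.nullMeasurableSet measurableSet_Ioo,
            inter_eq_left.mpr hIoo]
      _ ≤ volume (pixelIdx n hn ⁻¹' {a}) :=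
          measure_mono fun x hx => pixelIdx_eq_of_mem_Ioo hn hx

lemma volume_pixelIdx_comp_preimage_singleton {ι : Type*} [Fintype ι] {n : ℕ} (hn : 0 < n)
    (φ : ι → Fin n) :
    volume ((fun x : ι → unitI => pixelIdx n hn ∘ x) ⁻¹' {φ}) =
      (n : ℝ≥0∞)⁻¹ ^ Fintype.card ι := by
  have hfiber : (fun x : ι → unitI => pixelIdx n hn ∘ x) ⁻¹' {φ} =
      univ.pi fun i => pixelIdx n hn ⁻¹' {φ i} := by
    ext x
    simp [funext_iff]
  rw [hfiber, volume_pi_pi]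
  simp [volume_pixelIdx_preimage_singleton]

lemma integral_comp_pixelIdx_comp {ι : Type*} [Fintype ι] [DecidableEq ι] {n : ℕ} (hn : 0 < n)
    (f : (ι → Fin n) → ℝ) :
    ∫ x : ι → unitI, f (pixelIdx n hn ∘ x) = (∑ φ, f φ) / n ^ Fintype.card ι := by
  have hp : Measurable fun x : ι → unitI => pixelIdx n hn ∘ x :=
    measurable_pi_lambda _ fun i => (measurable_pixelIdx n hn).comp (measurable_pi_apply i)
  rw [← integral_map hp.aemeasurable .of_discrete, integral_fintype .of_finite,
    Finset.sum_div]
  refine Finset.sum_congr rfl fun φ _ => ?_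
  rw [measureReal_def, Measure.map_apply hp (measurableSet_singleton φ),
    volume_pixelIdx_comp_preimage_singleton, smul_eq_mul, ENNReal.toReal_pow, ENNReal.toReal_inv,
    ENNReal.toReal_natCast, inv_pow, inv_mul_eq_div]

lemma prod_edgeFinset_lift_ite_adj_eq_indicator {V W : Type*} (H : SimpleGraph V)
    [Fintype H.edgeSet] (G : SimpleGraph W) [DecidableRel G.Adj] (ψ : V → W) :
    ∏ e ∈ H.edgeFinset, Sym2.lift ⟨fun i j => if G.Adj (ψ i) (ψ j) then (1 : ℝ) else 0,
        fun i j => by simp only [G.adj_comm]⟩ e =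
      (range ((⇑) : (H →g G) → V → W)).indicator 1 ψ := by
  by_cases hψ : ψ ∈ range ((⇑) : (H →g G) → V → W)
  · rw [indicator_of_mem hψ]
    obtain ⟨f, rfl⟩ := hψ
    refine Finset.prod_eq_one fun e he => ?_
    induction e with
    | _ i j => simp [f.map_adj (H.mem_edgeFinset.mp he)]
  · rw [indicator_of_notMem hψ]
    obtain ⟨i, j, hij, hG⟩ : ∃ i j, H.Adj i j ∧ ¬ G.Adj (ψ i) (ψ j) := by
      by_contra! h
      exact hψ ⟨⟨ψ, h _ _⟩, rfl⟩
    exact Finset.prod_eq_zero (i := s(i, j)) (H.mem_edgeFinset.mpr hij) (by simp [hG])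

/-- The homomorphism density into a graphon extends the homomorphism density into a graph:
`t(H, W_G) = t(H, G)`. -/
theorem homDensityG_pixelGraphon {k n : ℕ} (hn : 0 < n) (H : SimpleGraph (Fin k))
    (G : SimpleGraph (Fin n)) :
    homDensityG H (pixelGraphon hn G) = homDensity H G := by
  classical
  let homs : Set (Fin k → Fin n) := range ((⇑) : (H →g G) → Fin k → Fin n)
  calc homDensityG H (pixelGraphon hn G)
      = ∫ x : Fin k → unitI, homs.indicator 1 (pixelIdx n hn ∘ x) := by
        rw [homDensityG]
        congr 1 with x
        exact prod_edgeFinset_lift_ite_adj_eq_indicator H G (pixelIdx n hn ∘ x)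
    _ = (∑ φ, homs.indicator (1 : (Fin k → Fin n) → ℝ) φ) / n ^ k := by
        rw [integral_comp_pixelIdx_comp hn (homs.indicator 1), Fintype.card_fin]
    _ = homDensity H G := by
        rw [Finset.sum_indicator_eq_sum_filter, homDensity, homCount,
          ← Nat.card_range_of_injective DFunLike.coe_injective]
        simp only [Pi.one_apply, Finset.sum_const, nsmul_eq_mul, mul_one, Nat.card_eq_fintype_card,
          Fintype.card_subtype, homs]
end
end

section
/- The constant graphon W ≡ 1/2 solves the minimization problem for 4-cycle density among graphons of edge density at least 1/2: t(K₂, W) = 1/2, t(C₄, W) = 1/16, and for every graphon U with t(K₂, U) ≥ 1/2 one has t(C₄, U) ≥ 1/16 = t(C₄, W). -/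
open MeasureTheory

attribute [local instance] MeasureTheory.Measure.Subtype.measureSpace

noncomputable section

/-- The edge density `t(K₂, W)` of a graphon. -/
def edgeDensityG (W : Graphon) : ℝ := ∫ p : unitI × unitI, W.toFun p.1 p.2

/-- The 4-cycle density `t(C₄, W)` of a graphon. -/
def cycle4DensityG (W : Graphon) : ℝ :=
  ∫ x : Fin 4 → unitI,
    W.toFun (x 0) (x 1) * W.toFun (x 1) (x 2) * W.toFun (x 2) (x 3) * W.toFun (x 3) (x 0)

/-- The constant graphon `W ≡ 1/2`. -/
def halfGraphon : Graphon where
  toFun _ _ := 1/2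
  measurable' := measurable_const
  symm' := fun _ _ => rfl
  nonneg' := fun _ _ => by norm_num
  le_one' := fun _ _ => by norm_num

/-!
Write `d(x) = ∫ W(x,y) dy` for the degree and `c(x,z) = ∫ W(x,y) W(y,z) dy` for the
codegree. Then `t(K₂, W) = ∫ d`, and by Fubini and symmetry `∫∫ c = ∫ d²`, while integrating
the 4-cycle density first over the two vertices opposite to a fixed diagonal pair gives
`t(C₄, W) = ∫∫ c²`. Two applications of Cauchy–Schwarz yield
`t(C₄, W) ≥ (∫∫ c)² = (∫ d²)² ≥ t(K₂, W)⁴`.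
-/

section Probability

variable {Ω : Type*} [MeasurableSpace Ω] {μ : Measure Ω} [IsProbabilityMeasure μ] {f : Ω → ℝ}

theorem sq_integral_le_integral_sq (hf : MemLp f 2 μ) : (∫ x, f x ∂μ) ^ 2 ≤ ∫ x, f x ^ 2 ∂μ := by
  have h := ProbabilityTheory.variance_nonneg f μ
  rw [ProbabilityTheory.variance_eq_sub hf, sub_nonneg] at h
  simpa using h

theorem norm_integral_le_one (hf : ∀ x, ‖f x‖ ≤ 1) : ‖∫ x, f x ∂μ‖ ≤ 1 := by
  simpa using norm_integral_le_of_norm_le_const (μ := μ) (ae_of_all _ hf)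

end Probability

theorem norm_mul_le_one {R : Type*} [NonUnitalSeminormedRing R] {a b : R} (ha : ‖a‖ ≤ 1)
    (hb : ‖b‖ ≤ 1) : ‖a * b‖ ≤ 1 :=
  (norm_mul_le a b).trans (mul_le_one₀ ha (norm_nonneg b) hb)

theorem integral_fin_four_eq_integral_prod_prod {α : Type*} [MeasurableSpace α] (μ : Measure α)
    [SigmaFinite μ] {f : (Fin 4 → α) → ℝ}
    (hf : AEStronglyMeasurable f (Measure.pi fun _ => μ)) :
    ∫ x, f x ∂Measure.pi (fun _ => μ) =
      ∫ p, f ![p.1.1, p.2.1, p.1.2, p.2.2] ∂(μ.prod μ).prod (μ.prod μ) := by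
  set g : (α × α) × (α × α) → Fin 4 → α := fun p => ![p.1.1, p.2.1, p.1.2, p.2.2]
  have hg : Measurable g := by
    refine measurable_pi_iff.mpr fun i => ?_
    fin_cases i <;>
      simp only [Fin.zero_eta, Fin.mk_one, Fin.reduceFinMk, Fin.isValue, Matrix.cons_val,
        Matrix.cons_val_zero, Matrix.cons_val_one, g] <;>
      fun_prop
  have hmap : Measure.pi (fun _ => μ) = ((μ.prod μ).prod (μ.prod μ)).map g := by
    refine Measure.pi_eq fun s hs => ?_
    have hpreimage : g ⁻¹' Set.univ.pi s = (s 0 ×ˢ s 2) ×ˢ (s 1 ×ˢ s 3) := by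
      ext p
      simp only [Set.mem_preimage, Set.mem_pi, Set.mem_univ, forall_const, Fin.forall_fin_succ,
        Fin.isValue, Matrix.cons_val_zero, Matrix.cons_val_succ, Fin.succ_zero_eq_one,
        Fin.succ_one_eq_two, Matrix.cons_val_fin_one, Fin.reduceSucc, IsEmpty.forall_iff,
        and_true, Set.mem_prod, g]
      tauto
    rw [Measure.map_apply hg (.univ_pi hs), hpreimage, Measure.prod_prod, Measure.prod_prod,
      Measure.prod_prod, Fin.prod_univ_four]
    ring
  rw [hmap, integral_map hg.aemeasurable (hmap ▸ hf)]

namespace Graphon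

variable (W : Graphon)

theorem norm_le_one (x y : unitI) : ‖W.toFun x y‖ ≤ 1 := by
  rw [Real.norm_of_nonneg (W.nonneg' x y)]
  exact W.le_one' x y

@[fun_prop]
theorem measurable_toFun_comp {β : Type*} [MeasurableSpace β] {f g : β → unitI}
    (hf : Measurable f) (hg : Measurable g) : Measurable fun b => W.toFun (f b) (g b) :=
  W.measurable'.comp (hf.prodMk hg)

def degree (x : unitI) : ℝ := ∫ y, W.toFun x y

def codegree (x z : unitI) : ℝ := ∫ y, W.toFun x y * W.toFun y z

theorem memLp_degree (p : ENNReal) : MemLp W.degree p := by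
  refine .of_bound ?_ 1 (ae_of_all _ fun x => norm_integral_le_one (W.norm_le_one x))
  exact (StronglyMeasurable.integral_prod_right (f := W.toFun) (by fun_prop)).aestronglyMeasurable

theorem memLp_codegree (p : ENNReal) :
    MemLp (fun q : unitI × unitI => W.codegree q.1 q.2) p := by
  refine .of_bound ?_ 1 (ae_of_all _ fun _ => norm_integral_le_one fun _ =>
    norm_mul_le_one (W.norm_le_one _ _) (W.norm_le_one _ _))
  exact (StronglyMeasurable.integral_prod_right
    (f := fun (q : unitI × unitI) y => W.toFun q.1 y * W.toFun y q.2)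
    (by fun_prop)).aestronglyMeasurable

theorem edgeDensityG_eq_integral_degree : edgeDensityG W = ∫ x, W.degree x := by
  have hint : Integrable (fun p : unitI × unitI => W.toFun p.1 p.2) (volume.prod volume) :=
    .of_bound (by fun_prop) 1 (ae_of_all _ fun _ => W.norm_le_one _ _)
  rw [edgeDensityG, Measure.volume_eq_prod, integral_prod _ hint]
  rfl

theorem integral_codegree : ∫ p : unitI × unitI, W.codegree p.1 p.2 = ∫ y, W.degree y ^ 2 := by
  have hint : Integrable (Function.uncurry fun (p : unitI × unitI) y =>
      W.toFun p.1 y * W.toFun y p.2) (volume.prod volume) :=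
    .of_bound (by fun_prop) 1
      (ae_of_all _ fun _ => norm_mul_le_one (W.norm_le_one _ _) (W.norm_le_one _ _))
  have hdeg (y : unitI) : ∫ x, W.toFun x y = W.degree y :=
    integral_congr_ae (ae_of_all _ fun x => W.symm' x y)
  simp only [codegree]
  rw [integral_integral_swap hint]
  congr 1; funext y
  rw [Measure.volume_eq_prod, integral_prod_mul (fun x => W.toFun x y) (W.toFun y), hdeg, sq]
  rfl

theorem cycle4DensityG_eq_integral_codegree_sq :
    cycle4DensityG W = ∫ p : unitI × unitI, W.codegree p.1 p.2 ^ 2 := by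
  rw [cycle4DensityG, volume_pi, integral_fin_four_eq_integral_prod_prod volume (by fun_prop)]
  have hint : Integrable (fun q : (unitI × unitI) × (unitI × unitI) =>
      W.toFun q.1.1 q.2.1 * W.toFun q.2.1 q.1.2 * W.toFun q.1.2 q.2.2 * W.toFun q.2.2 q.1.1)
      ((volume.prod volume).prod (volume.prod volume)) :=
    .of_bound (by fun_prop) 1 (ae_of_all _ fun _ => norm_mul_le_one (norm_mul_le_one
      (norm_mul_le_one (W.norm_le_one _ _) (W.norm_le_one _ _)) (W.norm_le_one _ _))
      (W.norm_le_one _ _))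
  simp only [Matrix.cons_val]
  rw [integral_prod _ hint, Measure.volume_eq_prod]
  congr 1; funext p
  have hfactor (y z : unitI) : W.toFun p.1 y * W.toFun y p.2 * W.toFun p.2 z * W.toFun z p.1 =
      (W.toFun p.1 y * W.toFun y p.2) * (W.toFun p.1 z * W.toFun z p.2) := by
    rw [W.symm' p.2 z, W.symm' z p.1]; ring
  simp_rw [hfactor]
  exact (integral_prod_mul (fun y => W.toFun p.1 y * W.toFun y p.2)
    (fun z => W.toFun p.1 z * W.toFun z p.2)).trans (sq _).symm

theorem edgeDensityG_pow_four_le_cycle4DensityG : edgeDensityG W ^ 4 ≤ cycle4DensityG W :=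
  calc edgeDensityG W ^ 4 = ((∫ x, W.degree x) ^ 2) ^ 2 := by
        rw [edgeDensityG_eq_integral_degree]; ring
    _ ≤ (∫ x, W.degree x ^ 2) ^ 2 :=
        pow_le_pow_left₀ (sq_nonneg _) (sq_integral_le_integral_sq (W.memLp_degree 2)) 2
    _ = (∫ p : unitI × unitI, W.codegree p.1 p.2) ^ 2 := by rw [integral_codegree]
    _ ≤ ∫ p : unitI × unitI, W.codegree p.1 p.2 ^ 2 :=
        sq_integral_le_integral_sq (W.memLp_codegree 2)
    _ = cycle4DensityG W := (cycle4DensityG_eq_integral_codegree_sq W).symm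

end Graphon

/-- The constant graphon `W ≡ 1/2` solves the minimization problem for the 4-cycle density
among graphons of edge density at least `1/2`. -/
theorem halfGraphon_minimizes_cycle4_density :
    edgeDensityG halfGraphon = 1/2 ∧ cycle4DensityG halfGraphon = 1/16 ∧
      ∀ U : Graphon, edgeDensityG U ≥ 1/2 → cycle4DensityG U ≥ 1/16 := by
  refine ⟨by simp [edgeDensityG, halfGraphon], by norm_num [cycle4DensityG, halfGraphon],
    fun U hU => ?_⟩
  calc (1/16 : ℝ) = (1/2) ^ 4 := by norm_num
    _ ≤ edgeDensityG U ^ 4 := pow_le_pow_left₀ (by norm_num) hU 4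
    _ ≤ cycle4DensityG U := U.edgeDensityG_pow_four_le_cycle4DensityG
end
end
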